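/- For every n ≥ 2, if A is an uncountable compact subset of L (in the Euclidean topology), then the space (X, τ(A)) is perfect but not Lindelöf, and likewise the space (X, τ(L \ A)) is perfect but not Lindelöf. -/

import Mathlib

open Metric Set TopologicalSpace

noncomputable section

/-- The last coordinate `x (n-1)` of a point of `EuclideanSpace ℝ (Fin n)`
(junk value `0` if `n = 0`). -/
def lastCoord (n : ℕ) (x : EuclideanSpace ℝ (Fin n)) : ℝ :=
  if h : 0 < n then x ⟨n - 1, Nat.sub_lt h one_pos⟩ else 0

/-- The closed upper half-space `X = {x : x (n-1) ≥ 0}`. -/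
def HalfSpace (n : ℕ) : Set (EuclideanSpace ℝ (Fin n)) := {x | 0 ≤ lastCoord n x}

/-- The open upper half-space `P = {x : x (n-1) > 0}`. -/
def OpenHalf (n : ℕ) : Set (EuclideanSpace ℝ (Fin n)) := {x | 0 < lastCoord n x}

/-- The boundary hyperplane `L = {x : x (n-1) = 0}`. -/
def Bdry (n : ℕ) : Set (EuclideanSpace ℝ (Fin n)) := {x | lastCoord n x = 0}

/-- The `n`-th standard basis vector `e` (junk value `0` if `n = 0`). -/
def eVec (n : ℕ) : EuclideanSpace ℝ (Fin n) :=
  if h : 0 < n then EuclideanSpace.single ⟨n - 1, Nat.sub_lt h one_pos⟩ (1 : ℝ) else 0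

/-- The tangent ball `B̃(a, ε) = {a} ∪ B(a + ε • e, ε)`. -/
def tangentBall (n : ℕ) (a : EuclideanSpace ℝ (Fin n)) (ε : ℝ) :
    Set (EuclideanSpace ℝ (Fin n)) :=
  {a} ∪ ball (a + ε • eVec n) ε

/-- The generating family for the topology `τ(A)` on `X`:
balls `B(a,ε)` with `a ∈ P`, `0 < ε < a (n-1)`; traces `B(a,ε) ∩ X` with `a ∈ A`, `ε > 0`;
and tangent balls `B̃(a,ε)` with `a ∈ L \ A`, `ε > 0`. -/
def niemGen (n : ℕ) (A : Set (EuclideanSpace ℝ (Fin n))) : Set (Set (HalfSpace n)) :=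
  {s | ∃ a ∈ OpenHalf n, ∃ ε, 0 < ε ∧ ε < lastCoord n a ∧
      s = Subtype.val ⁻¹' ball a ε} ∪
  {s | ∃ a ∈ A, ∃ ε, 0 < ε ∧ s = Subtype.val ⁻¹' ball a ε} ∪
  {s | ∃ a ∈ Bdry n \ A, ∃ ε, 0 < ε ∧ s = Subtype.val ⁻¹' tangentBall n a ε}

/-- The topology `τ(A)` on `X`; `τ(∅)` is the Niemytzki topology `τ_N`. -/
def tau (n : ℕ) (A : Set (EuclideanSpace ℝ (Fin n))) : TopologicalSpace (HalfSpace n) :=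
  generateFrom (niemGen n A)

/-- The inclusion of `L` into `X`. -/
def inclLX (n : ℕ) (x : Bdry n) : HalfSpace n := ⟨x.1, le_of_eq x.2.symm⟩

/-- The subspace topology `τ(A)|_L` on `L` induced from `(X, τ(A))`. -/
def tauL (n : ℕ) (A : Set (EuclideanSpace ℝ (Fin n))) : TopologicalSpace (Bdry n) :=
  TopologicalSpace.induced (inclLX n) (tau n A)

/-- A space is perfect if every closed set is a `Gδ`-set. -/
def IsPerfectSpace (X : Type*) [TopologicalSpace X] : Prop :=
  ∀ s : Set X, IsClosed s → IsGδ s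

/-- An `Fσ`-set: a countable union of closed sets. -/
def IsFsigma {X : Type*} [TopologicalSpace X] (s : Set X) : Prop :=
  ∃ F : ℕ → Set X, (∀ i, IsClosed (F i)) ∧ s = ⋃ i, F i

/-- Countably paracompact: every countable open cover admits a locally finite open refinement. -/
def CountablyParacompact (X : Type*) [TopologicalSpace X] : Prop :=
  ∀ u : ℕ → Set X, (∀ i, IsOpen (u i)) → (⋃ i, u i) = Set.univ →
    ∃ (ι : Type) (v : ι → Set X), (∀ j, IsOpen (v j)) ∧ (⋃ j, v j) = Set.univ ∧
      LocallyFinite v ∧ ∀ j, ∃ i, v j ⊆ u i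

/-- A zero set: the zero locus of a continuous real-valued function. -/
def IsZeroSet {X : Type*} [TopologicalSpace X] (s : Set X) : Prop :=
  ∃ f : X → ℝ, Continuous f ∧ s = f ⁻¹' {0}

/-- `Y` is z-embedded in `X` if every zero set of the subspace `Y`
is the trace on `Y` of a zero set of `X`. -/
def ZEmbedded {X : Type*} [TopologicalSpace X] (Y : Set X) : Prop :=
  ∀ s : Set Y, IsZeroSet s → ∃ Z : Set X, IsZeroSet Z ∧ s = Subtype.val ⁻¹' Z

/-- `Y` is `C*`-embedded in `X` if every bounded continuous real-valued function on the
subspace `Y` extends to a bounded continuous function on `X`. -/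
def CStarEmbedded {X : Type*} [TopologicalSpace X] (Y : Set X) : Prop :=
  ∀ f : Y → ℝ, Continuous f → (∃ M, ∀ y, |f y| ≤ M) →
    ∃ g : X → ℝ, Continuous g ∧ (∃ M, ∀ x, |g x| ≤ M) ∧ ∀ y : Y, g ↑y = f y
end

/-!
On `T ∪ P` the topology `τ(T)` has the Euclidean neighbourhoods, while every subset of `L \ T`
is a `Gδ` (intersect the unions of ever smaller tangent balls at its points). Splitting a closed
set along these two pieces shows that `τ(T)` is perfect whenever `T` is a Euclidean `Gδ`. An
uncountable Euclidean-closed subset of `L \ T` is closed and discrete in `τ(T)`, because a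
tangent ball meets `L` only in its base point, so `τ(T)` is not Lindelöf. For `τ(A)` such a set
is a segment of `L` beyond a ball containing `A`; for `τ(L \ A)` it is `A` itself.
-/

open Filter Topology

section Coordinates

variable {n : ℕ}

lemma lastCoord_apply (hn : 0 < n) (x : EuclideanSpace ℝ (Fin n)) :
    lastCoord n x = x ⟨n - 1, Nat.sub_lt hn one_pos⟩ :=
  dif_pos hn

lemma continuous_lastCoord : Continuous (lastCoord n) := by
  by_cases hn : 0 < n
  · rw [funext (lastCoord_apply hn)]
    fun_prop
  · rw [show lastCoord n = fun _ => 0 from funext fun _ => dif_neg hn]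
    exact continuous_const

lemma isOpen_openHalf : IsOpen (OpenHalf n) :=
  isOpen_lt continuous_const continuous_lastCoord

lemma isClosed_bdry : IsClosed (Bdry n) :=
  isClosed_eq continuous_lastCoord continuous_const

lemma abs_lastCoord_sub_le_dist (hn : 0 < n) (x y : EuclideanSpace ℝ (Fin n)) :
    |lastCoord n x - lastCoord n y| ≤ dist x y := by
  rw [lastCoord_apply hn, lastCoord_apply hn, ← Real.dist_eq]
  exact PiLp.dist_apply_le x y _

lemma norm_eVec (hn : 0 < n) : ‖eVec n‖ = 1 := by
  simp [eVec, hn]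

lemma lastCoord_add_smul_eVec (hn : 0 < n) (a : EuclideanSpace ℝ (Fin n)) (ε : ℝ) :
    lastCoord n (a + ε • eVec n) = lastCoord n a + ε := by
  simp [lastCoord_apply hn, eVec, dif_pos hn]

end Coordinates

section TangentBall

variable {n : ℕ} {a y : EuclideanSpace ℝ (Fin n)} {ε : ℝ}

lemma lastCoord_mem_Ioo_of_mem_ball_add_smul_eVec (hn : 0 < n) (ha : a ∈ Bdry n)
    (hy : y ∈ ball (a + ε • eVec n) ε) : lastCoord n y ∈ Ioo 0 (2 * ε) := by
  have h := (abs_lastCoord_sub_le_dist hn y _).trans_lt (mem_ball.1 hy)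
  rw [lastCoord_add_smul_eVec hn, show lastCoord n a = 0 from ha, zero_add] at h
  constructor <;> linarith [abs_lt.1 h]

lemma tangentBall_inter_bdry (hn : 0 < n) (ha : a ∈ Bdry n) :
    tangentBall n a ε ∩ Bdry n = {a} := by
  refine subset_antisymm ?_ (singleton_subset_iff.2 ⟨Or.inl rfl, ha⟩)
  rintro y ⟨hya | hy, hyL⟩
  · exact hya
  · exact absurd hyL (lastCoord_mem_Ioo_of_mem_ball_add_smul_eVec hn ha hy).1.ne'

lemma tangentBall_subset_ball (hn : 0 < n) (a : EuclideanSpace ℝ (Fin n)) (hε : 0 < ε) :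
    tangentBall n a ε ⊆ ball a (2 * ε) := by
  rintro y (rfl | hy)
  · exact mem_ball_self (by linarith)
  · have hcenter : dist (a + ε • eVec n) a = ε := by
      rw [dist_eq_norm, add_sub_cancel_left, norm_smul, norm_eVec hn, mul_one,
        Real.norm_of_nonneg hε.le]
    exact mem_ball.2 (by linarith [dist_triangle y (a + ε • eVec n) a, mem_ball.1 hy])

end TangentBall

section Tau

variable {n : ℕ} {T : Set (EuclideanSpace ℝ (Fin n))}

lemma exists_mem_niemGen_subset_ball (hn : 0 < n) (x : HalfSpace n) {δ : ℝ} (hδ : 0 < δ) :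
    ∃ s ∈ niemGen n T, x ∈ s ∧ s ⊆ Subtype.val ⁻¹' ball x.1 δ := by
  rcases (show 0 ≤ lastCoord n x.1 from x.2).lt_or_eq with hpos | hzero
  · refine ⟨Subtype.val ⁻¹' ball x.1 (min δ (lastCoord n x.1) / 2),
      Or.inl (Or.inl ⟨x.1, hpos, _, by positivity, ?_, rfl⟩), mem_ball_self (by positivity),
      preimage_mono (ball_subset_ball ?_)⟩
    · linarith [min_le_right δ (lastCoord n x.1)]
    · linarith [min_le_left δ (lastCoord n x.1), lt_min hδ hpos]
  by_cases hxT : x.1 ∈ T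
  · exact ⟨_, Or.inl (Or.inr ⟨x.1, hxT, δ, hδ, rfl⟩), mem_ball_self hδ, subset_rfl⟩
  · refine ⟨Subtype.val ⁻¹' tangentBall n x.1 (δ / 2),
      Or.inr ⟨x.1, ⟨hzero.symm, hxT⟩, δ / 2, by positivity, rfl⟩, Or.inl rfl, ?_⟩
    have h := tangentBall_subset_ball hn x.1 (half_pos hδ)
    rw [mul_div_cancel₀ δ two_ne_zero] at h
    exact preimage_mono h

lemma continuous_val_tau (hn : 0 < n) :
    @Continuous _ _ (tau n T) _ (Subtype.val : HalfSpace n → EuclideanSpace ℝ (Fin n)) := by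
  let _ := tau n T
  refine continuous_iff_continuousAt.2 fun x => Metric.tendsto_nhds.2 fun δ hδ => ?_
  obtain ⟨s, hs, hxs, hsub⟩ := exists_mem_niemGen_subset_ball hn x hδ
  exact mem_of_superset ((isOpen_generateFrom_of_mem hs).mem_nhds hxs) hsub

lemma nhds_le_nhds_tau {x : HalfSpace n} (hx : x.1 ∈ T ∪ OpenHalf n) :
    𝓝 x ≤ @nhds _ (tau n T) x := by
  rw [nhds_subtype, tau, nhds_generateFrom]
  refine le_iInf₂ fun s ⟨hxs, hs⟩ => le_principal_iff.2 ?_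
  rcases hs with (⟨a, -, ε, -, -, rfl⟩ | ⟨a, -, ε, -, rfl⟩) | ⟨a, ⟨haL, haT⟩, ε, -, rfl⟩
  · exact preimage_mem_comap (isOpen_ball.mem_nhds hxs)
  · exact preimage_mem_comap (isOpen_ball.mem_nhds hxs)
  · have hxa : x.1 ≠ a := by
      rintro rfl
      rcases hx with hxT | hxP
      · exact haT hxT
      · exact hxP.ne' haL
    exact mem_comap.2 ⟨_, isOpen_ball.mem_nhds (hxs.resolve_left hxa),
      preimage_mono subset_union_right⟩

lemma mem_closure_tau_of_mem_closure_image {x : HalfSpace n} (hx : x.1 ∈ T ∪ OpenHalf n)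
    {S : Set (HalfSpace n)} (h : x.1 ∈ closure (Subtype.val '' S)) : x ∈ closure[tau n T] S := by
  have hcluster : ClusterPt x (𝓟 S) := mem_closure_iff_clusterPt.1 (closure_subtype.2 h)
  exact (@mem_closure_iff_clusterPt _ (tau n T) _ _).2
    (NeBot.mono hcluster (inf_le_inf_right _ (nhds_le_nhds_tau hx)))

lemma isGδ_tau_of_subset_bdry_diff (hn : 0 < n) {S : Set (HalfSpace n)}
    (hS : ∀ x ∈ S, x.1 ∈ Bdry n \ T) : @IsGδ _ (tau n T) S := by
  let _ := tau n T
  have hS_eq : S = ⋂ k : ℕ, ⋃ a ∈ S,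
      Subtype.val ⁻¹' tangentBall n a.1 (1 / (k + 1)) := by
    refine subset_antisymm (fun x hx => mem_iInter.2 fun k => mem_biUnion hx
      (show x.1 ∈ tangentBall n x.1 _ from Or.inl rfl)) ?_
    intro y hy
    by_contra hyS
    have hbound : ∀ k : ℕ, lastCoord n y.1 ∈ Ioo 0 (2 * (1 / ((k : ℝ) + 1))) := by
      intro k
      obtain ⟨a, haS, hya | hya⟩ := mem_iUnion₂.1 (mem_iInter.1 hy k)
      · exact absurd (Subtype.ext hya ▸ haS) hyS
      · exact lastCoord_mem_Ioo_of_mem_ball_add_smul_eVec hn (hS a haS).1 hya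
    obtain ⟨k, hk⟩ := exists_nat_one_div_lt (half_pos (hbound 0).1)
    linarith [(hbound k).2]
  rw [hS_eq]
  exact .iInter_of_isOpen fun k => isOpen_biUnion fun a ha =>
    isOpen_generateFrom_of_mem (Or.inr ⟨a.1, hS a ha, 1 / (k + 1), by positivity, rfl⟩)

theorem tau_isPerfect (hn : 0 < n) (hT : IsGδ T) : @IsPerfectSpace _ (tau n T) := by
  let _ := tau n T
  intro F hF
  set W : Set (HalfSpace n) := Subtype.val ⁻¹' (T ∪ OpenHalf n)
  have hFW : F ∩ W = Subtype.val ⁻¹' closure (Subtype.val '' (F ∩ W)) ∩ W := by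
    refine subset_antisymm (fun x hx => ⟨subset_closure (mem_image_of_mem _ hx), hx.2⟩) ?_
    rintro x ⟨hxC, hxW⟩
    exact ⟨hF.closure_subset_iff.2 inter_subset_left
      (mem_closure_tau_of_mem_closure_image hxW hxC), hxW⟩
  have hFWc : IsGδ (F ∩ Wᶜ) := by
    refine isGδ_tau_of_subset_bdry_diff hn fun x ⟨_, hxW⟩ => ?_
    simp only [W, mem_compl_iff, mem_preimage, mem_union, not_or, OpenHalf, mem_ofPred_eq,
      not_lt] at hxW
    exact ⟨le_antisymm hxW.2 x.2, hxW.1⟩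
  rw [← inter_union_compl F W, hFW]
  exact ((isClosed_closure.isGδ.preimage (continuous_val_tau hn)).inter
    ((hT.union isOpen_openHalf.isGδ).preimage (continuous_val_tau hn))).union hFWc

theorem tau_not_lindelofSpace (hn : 0 < n) {D : Set (EuclideanSpace ℝ (Fin n))}
    (hD : D ⊆ Bdry n \ T) (hDc : IsClosed D) (hDu : ¬ D.Countable) :
    ¬ @LindelofSpace _ (tau n T) := by
  let _ := tau n T
  intro hL
  have hclosed : IsClosed (Subtype.val ⁻¹' D : Set (HalfSpace n)) :=
    hDc.preimage (continuous_val_tau hn)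
  have hdiscrete : IsDiscrete (Subtype.val ⁻¹' D : Set (HalfSpace n)) := by
    refine isDiscrete_iff_forall_mem_exists_isOpen.2 fun y hy =>
      ⟨Subtype.val ⁻¹' tangentBall n y.1 1,
        isOpen_generateFrom_of_mem (Or.inr ⟨y.1, hD hy, 1, one_pos, rfl⟩), ?_⟩
    ext z
    refine ⟨fun ⟨hzB, hzD⟩ => Subtype.ext ?_, fun hz => by
      rw [mem_singleton_iff.1 hz]; exact ⟨Or.inl rfl, hy⟩⟩
    simpa using (tangentBall_inter_bdry hn (hD hy).1).subset ⟨hzB, (hD hzD).1⟩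
  refine hDu ?_
  have h := (hclosed.isLindelof.countable_of_isDiscrete hdiscrete).image Subtype.val
  have hDX : D ⊆ HalfSpace n := fun x hx => (hD hx).1.symm.le
  rwa [Subtype.image_preimage_coe, inter_eq_right.2 hDX] at h

end Tau

lemma exists_isClosed_not_countable_subset_bdry_diff {n : ℕ} (hn : 2 ≤ n)
    {A : Set (EuclideanSpace ℝ (Fin n))} (hA : Bornology.IsBounded A) :
    ∃ D, IsClosed D ∧ ¬ D.Countable ∧ D ⊆ Bdry n \ A := by
  obtain ⟨R, hR, hAR⟩ := hA.subset_closedBall_lt 0 0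
  set e : EuclideanSpace ℝ (Fin n) := EuclideanSpace.single ⟨0, by omega⟩ 1
  have he : e ≠ 0 := by simp [e]
  have hinj : Function.Injective (fun t : ℝ => t • e) := smul_left_injective ℝ he
  refine ⟨(fun t : ℝ => t • e) '' Icc (R + 1) (R + 2),
    (isCompact_Icc.image (continuous_id.smul continuous_const)).isClosed, ?_, ?_⟩
  · exact fun h => by simpa using countable_of_injective_of_countable_image hinj.injOn h
  · rintro _ ⟨t, ht, rfl⟩
    refine ⟨?_, fun htA => ?_⟩
    · simp only [Bdry, lastCoord_apply (by omega : 0 < n), mem_ofPred_eq, PiLp.smul_apply,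
        PiLp.single_apply, Fin.ext_iff, smul_eq_mul, mul_ite, mul_one, mul_zero,
        ite_eq_right_iff, e]
      omega
    · have h := hAR htA
      rw [mem_closedBall_zero_iff, norm_smul, PiLp.norm_single, norm_one, mul_one,
        Real.norm_of_nonneg (by linarith [ht.1])] at h
      linarith [ht.1]

/-- For every `n ≥ 2`, if `A` is an uncountable compact subset of `L` (Euclidean topology),
then `(X, τ(A))`, as well as `(X, τ(L \ A))`, is perfect but not Lindelöf. -/
theorem tauA_perfect_not_lindelof_of_compact (n : ℕ) (hn : 2 ≤ n)
    (A : Set (EuclideanSpace ℝ (Fin n))) (hA : A ⊆ Bdry n)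
    (hAc : IsCompact A) (hAu : ¬ A.Countable) :
    (@IsPerfectSpace (HalfSpace n) (tau n A) ∧ ¬ @LindelofSpace (HalfSpace n) (tau n A)) ∧
    (@IsPerfectSpace (HalfSpace n) (tau n (Bdry n \ A)) ∧
      ¬ @LindelofSpace (HalfSpace n) (tau n (Bdry n \ A))) := by
  have hn₀ : 0 < n := by omega
  obtain ⟨D, hDc, hDu, hDA⟩ := exists_isClosed_not_countable_subset_bdry_diff hn hAc.isBounded
  have hA_sub : A ⊆ Bdry n \ (Bdry n \ A) := fun a ha => ⟨hA ha, fun h => h.2 ha⟩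
  exact ⟨⟨tau_isPerfect hn₀ hAc.isClosed.isGδ, tau_not_lindelofSpace hn₀ hDA hDc hDu⟩,
    ⟨tau_isPerfect hn₀ (isClosed_bdry.isGδ.inter hAc.isClosed.isOpen_compl.isGδ),
      tau_not_lindelofSpace hn₀ hA_sub hAc.isClosed hAu⟩⟩
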